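/- Let F, G ∈ L²(ℝ, ℝ^{r×r}) each have orthonormal integer translates, G satisfy the two-scale relation G = Σ_j F(2·−j) B_j, F be refinable with mask A, and suppose ∫ F(x)^T G(x+k) dx = 0 for all k ∈ ℤ. Then A^♯(z)B(z) + A^♯(−z)B(−z) = 0 for all z on the unit circle. -/

import Mathlib

/-! Expanding `(F x)ᵀ G(x + k)` through the refinement and two-scale relations, and using that
the half-step translates `F(2· - m)` are orthogonal with squared norm `1/2`, turns the
cross-orthogonality into `∑_m A_mᵀ B_{m+2k} = 0` for every `k`. On the other hand `A^♯(z) B(z)` is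
the symbol of the correlation sequence `d ↦ ∑_m A_mᵀ B_{m+d}`; adding its value at `-z` cancels
the odd coefficients and doubles the even ones, which vanish. -/

open Matrix Finset MeasureTheory

/-- Evaluation of the symbol `A(z) = ∑_j A_j z^j` of a finitely supported real matrix mask. -/
noncomputable def mSymbol {r : ℕ} (A : ℤ →₀ Matrix (Fin r) (Fin r) ℝ) (z : ℂ) :
    Matrix (Fin r) (Fin r) ℂ :=
  ∑ j ∈ A.support, z ^ j • (A j).map (Complex.ofReal)

/-- `A^♯(z) = A(z⁻¹)ᵀ`. -/
noncomputable def mSharp {r : ℕ} (A : ℤ →₀ Matrix (Fin r) (Fin r) ℝ) (z : ℂ) :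
    Matrix (Fin r) (Fin r) ℂ :=
  (mSymbol A z⁻¹)ᵀ

/-- The subsymbol `A_ε(z) = ∑_j A_{ε+2j} z^j`. -/
noncomputable def mSub {r : ℕ} (A : ℤ →₀ Matrix (Fin r) (Fin r) ℝ) (ε : ℤ) (z : ℂ) :
    Matrix (Fin r) (Fin r) ℂ :=
  ∑ m ∈ A.support, if m % 2 = ε % 2 then z ^ ((m - ε) / 2) • (A m).map (Complex.ofReal) else 0

open scoped Pointwise

noncomputable def matrixIntegral {α m n : Type*} [MeasurableSpace α] (M : α → Matrix m n ℝ)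
    (μ : Measure α) : Matrix m n ℝ :=
  Matrix.of fun i j => ∫ x, M x i j ∂μ

def crossCorr {ι κ ν R : Type*} [Fintype ι] [NonUnitalNonAssocSemiring R]
    (A : ℤ →₀ Matrix ι κ R) (B : ℤ →₀ Matrix ι ν R) (d : ℤ) : Matrix κ ν R :=
  ∑ m ∈ A.support, (A m)ᵀ * B (m + d)

section MatrixIntegral

variable {α ι κ ν o : Type*} [MeasurableSpace α] {μ : Measure α}

lemma integrable_transpose_mul_apply [Fintype ι] {F : α → Matrix ι κ ℝ} {G : α → Matrix ι ν ℝ}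
    (hF : ∀ i j, MemLp (fun x => F x i j) 2 μ) (hG : ∀ i j, MemLp (fun x => G x i j) 2 μ)
    (k : κ) (l : ν) : Integrable (fun x => ((F x)ᵀ * G x) k l) μ := by
  simp only [mul_apply, transpose_apply]
  exact integrable_finsetSum _ fun i _ => (hF i k).integrable_mul (hG i l)

lemma integrable_mul_mul_apply [Fintype κ] [Fintype ν] {X : α → Matrix κ ν ℝ}
    (hX : ∀ i j, Integrable (fun x => X x i j) μ) (P : Matrix ι κ ℝ) (Q : Matrix ν o ℝ)
    (i : ι) (j : o) : Integrable (fun x => (P * X x * Q) i j) μ := by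
  simp only [mul_apply, sum_mul]
  exact integrable_finsetSum _ fun l _ => integrable_finsetSum _ fun k _ =>
    ((hX k l).const_mul _).mul_const _

lemma matrixIntegral_finset_sum {β : Type*} {s : Finset β} {M : β → α → Matrix ι κ ℝ}
    (hM : ∀ b ∈ s, ∀ i j, Integrable (fun x => M b x i j) μ) :
    matrixIntegral (fun x => ∑ b ∈ s, M b x) μ = ∑ b ∈ s, matrixIntegral (M b) μ := by
  ext i j
  simp only [matrixIntegral, of_apply, Matrix.sum_apply]
  exact integral_finsetSum s fun b hb => hM b hb i j

lemma matrixIntegral_mul_mul [Fintype κ] [Fintype ν] {X : α → Matrix κ ν ℝ}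
    (hX : ∀ i j, Integrable (fun x => X x i j) μ) (P : Matrix ι κ ℝ) (Q : Matrix ν o ℝ) :
    matrixIntegral (fun x => P * X x * Q) μ = P * matrixIntegral X μ * Q := by
  ext i j
  simp only [matrixIntegral, of_apply, mul_apply, sum_mul]
  rw [integral_finsetSum _ fun l _ => integrable_finsetSum _ fun k _ =>
    ((hX k l).const_mul _).mul_const _]
  refine Finset.sum_congr rfl fun l _ => ?_
  rw [integral_finsetSum _ fun k _ => ((hX k l).const_mul _).mul_const _]
  refine Finset.sum_congr rfl fun k _ => ?_
  rw [integral_mul_const, integral_const_mul]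

end MatrixIntegral

section Translates

variable {ι κ ν : Type*} [Fintype ι]

lemma matrixIntegral_dilate_transpose_mul (F : ℝ → Matrix ι κ ℝ) (G : ℝ → Matrix ι ν ℝ)
    (a b : ℝ) :
    matrixIntegral (fun x => (F (2 * x - a))ᵀ * G (2 * x - b)) volume
      = (2 : ℝ)⁻¹ • matrixIntegral (fun x => (F x)ᵀ * G (x + (a - b))) volume := by
  ext k l
  have hshift := integral_sub_right_eq_self (μ := volume)
    (fun y => ((F y)ᵀ * G (y + (a - b))) k l) a
  simp only [sub_add_sub_cancel] at hshift
  simp only [matrixIntegral, of_apply, Matrix.smul_apply, smul_eq_mul]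
  rw [Measure.integral_comp_mul_left (fun y => ((F (y - a))ᵀ * G (y - b)) k l), hshift]
  norm_num

lemma integrable_dilate_transpose_mul_apply {F : ℝ → Matrix ι κ ℝ} {G : ℝ → Matrix ι ν ℝ}
    (hF : ∀ i j, MemLp (fun x => F x i j) 2 volume)
    (hG : ∀ i j, MemLp (fun x => G x i j) 2 volume) (a b : ℝ) (k : κ) (l : ν) :
    Integrable (fun x => ((F (2 * x - a))ᵀ * G (2 * x - b)) k l) volume := by
  have hFa i j : MemLp (fun x => F (x - a) i j) 2 volume :=
    (hF i j).comp_measurePreserving (measurePreserving_sub_right volume a)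
  have hGb i j : MemLp (fun x => G (x - b) i j) 2 volume :=
    (hG i j).comp_measurePreserving (measurePreserving_sub_right volume b)
  exact (integrable_transpose_mul_apply hFa hGb k l).comp_mul_left' two_ne_zero

lemma matrixIntegral_dilate_orthonormal [DecidableEq κ] {F : ℝ → Matrix ι κ ℝ}
    (hF : ∀ k : ℤ, matrixIntegral (fun x => (F x)ᵀ * F (x + k)) volume = if k = 0 then 1 else 0)
    (a b : ℤ) :
    matrixIntegral (fun x => (F (2 * x - a))ᵀ * F (2 * x - b)) volume
      = (2 : ℝ)⁻¹ • if a = b then 1 else 0 := by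
  rw [matrixIntegral_dilate_transpose_mul, ← Int.cast_sub, hF]
  simp only [sub_eq_zero]

lemma transpose_mul_twoScale_eq_sum [Fintype κ] {F : ℝ → Matrix ι κ ℝ} {G : ℝ → Matrix ι ν ℝ}
    {A : ℤ →₀ Matrix κ κ ℝ} {B : ℤ →₀ Matrix κ ν ℝ}
    (hRef : ∀ x, F x = ∑ m ∈ A.support, F (2 * x - m) * A m)
    (hTwoScale : ∀ x, G x = ∑ m ∈ B.support, F (2 * x - m) * B m) (x : ℝ) (k : ℤ) :
    (F x)ᵀ * G (x + k) = ∑ m ∈ A.support, ∑ n ∈ B.support,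
      (A m)ᵀ * ((F (2 * x - m))ᵀ * F (2 * x - ((n - 2 * k : ℤ) : ℝ))) * B n := by
  rw [hRef x, hTwoScale, transpose_sum, Matrix.sum_mul]
  refine Finset.sum_congr rfl fun m _ => ?_
  rw [Matrix.mul_sum]
  refine Finset.sum_congr rfl fun n _ => ?_
  rw [transpose_mul, Matrix.mul_assoc, Matrix.mul_assoc, Matrix.mul_assoc]
  push_cast
  ring_nf

end Translates

lemma crossCorr_eq_zero_of_even {ι κ ν : Type*} [Fintype ι] [Fintype κ] [DecidableEq κ]
    [Fintype ν] {F : ℝ → Matrix ι κ ℝ} {G : ℝ → Matrix ι ν ℝ}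
    {A : ℤ →₀ Matrix κ κ ℝ} {B : ℤ →₀ Matrix κ ν ℝ}
    (hFL2 : ∀ i j, MemLp (fun x => F x i j) 2 volume)
    (hFOrth : ∀ k : ℤ,
      matrixIntegral (fun x => (F x)ᵀ * F (x + k)) volume = if k = 0 then 1 else 0)
    (hCross : ∀ k : ℤ, matrixIntegral (fun x => (F x)ᵀ * G (x + k)) volume = 0)
    (hRef : ∀ x, F x = ∑ m ∈ A.support, F (2 * x - m) * A m)
    (hTwoScale : ∀ x, G x = ∑ m ∈ B.support, F (2 * x - m) * B m) {d : ℤ} (hd : Even d) :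
    crossCorr A B d = 0 := by
  obtain ⟨k, rfl⟩ := hd
  have hX (m n : ℤ) i j := integrable_dilate_transpose_mul_apply hFL2 hFL2 m ((n - 2 * k : ℤ) : ℝ) i j
  have hdelta (m : ℤ) : ∑ n ∈ B.support,
      (A m)ᵀ * ((2 : ℝ)⁻¹ • if m = n - 2 * k then 1 else 0) * B n
        = (2 : ℝ)⁻¹ • ((A m)ᵀ * B (m + (k + k))) := by
    rw [Finset.sum_eq_single (m + (k + k))]
    · rw [if_pos (by omega)]
      simp
    · intro n _ hn
      rw [if_neg (by omega), smul_zero, Matrix.mul_zero, Matrix.zero_mul]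
    · intro hn
      rw [Finsupp.notMem_support_iff.mp hn, Matrix.mul_zero]
  calc crossCorr A B (k + k)
      = (2 : ℝ) • ∑ m ∈ A.support, ∑ n ∈ B.support,
          (A m)ᵀ * ((2 : ℝ)⁻¹ • if m = n - 2 * k then 1 else 0) * B n := by
        simp only [hdelta, ← Finset.smul_sum, smul_smul]
        norm_num [crossCorr]
    _ = (2 : ℝ) • ∑ m ∈ A.support, ∑ n ∈ B.support, matrixIntegral (fun x =>
          (A m)ᵀ * ((F (2 * x - m))ᵀ * F (2 * x - ((n - 2 * k : ℤ) : ℝ))) * B n) volume := by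
        simp only [matrixIntegral_mul_mul (hX _ _), matrixIntegral_dilate_orthonormal hFOrth]
    _ = (2 : ℝ) • matrixIntegral (fun x => (F x)ᵀ * G (x + k)) volume := by
        simp only [transpose_mul_twoScale_eq_sum hRef hTwoScale]
        rw [matrixIntegral_finset_sum fun m _ i j => by
          simpa only [Matrix.sum_apply] using integrable_finsetSum _ fun n _ =>
            integrable_mul_mul_apply (hX m n) _ _ i j]
        congr 1
        refine Finset.sum_congr rfl fun m _ => ?_
        rw [matrixIntegral_finset_sum fun n _ => integrable_mul_mul_apply (hX m n) _ _]
    _ = 0 := by rw [hCross, smul_zero]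

lemma crossCorr_map_ofReal {r : ℕ} (A B : ℤ →₀ Matrix (Fin r) (Fin r) ℝ) (d : ℤ) :
    (crossCorr A B d).map Complex.ofReal
      = ∑ m ∈ A.support, ((A m).map Complex.ofReal)ᵀ * (B (m + d)).map Complex.ofReal := by
  ext i j
  simp [crossCorr, Matrix.sum_apply, Matrix.mul_apply]

lemma mSharp_mul_mSymbol {r : ℕ} (A B : ℤ →₀ Matrix (Fin r) (Fin r) ℝ) {w : ℂ} (hw : w ≠ 0) :
    mSharp A w * mSymbol B w
      = ∑ d ∈ B.support - A.support, w ^ d • (crossCorr A B d).map Complex.ofReal := by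
  set T : ℤ → ℤ → Matrix (Fin r) (Fin r) ℂ :=
    fun m n => ((A m).map Complex.ofReal)ᵀ * (B n).map Complex.ofReal
  have hsharp : mSharp A w * mSymbol B w
      = ∑ m ∈ A.support, ∑ n ∈ B.support, w ^ (n - m) • T m n := by
    rw [mSharp, mSymbol, mSymbol, transpose_sum, Finset.sum_mul]
    refine Finset.sum_congr rfl fun m _ => ?_
    rw [Finset.mul_sum]
    refine Finset.sum_congr rfl fun n _ => ?_
    rw [transpose_smul, smul_mul_smul_comm, _root_.inv_zpow', ← zpow_add₀ hw, neg_add_eq_sub]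
  simp only [hsharp, crossCorr_map_ofReal, Finset.smul_sum]
  conv_rhs => rw [Finset.sum_comm]
  refine Finset.sum_congr rfl fun m hm => ?_
  have himage : ∑ d ∈ B.support - A.support, w ^ d • T m (m + d)
      = ∑ n ∈ (B.support - A.support).image (m + ·), w ^ (n - m) • T m n := by
    rw [Finset.sum_image (add_right_injective m).injOn]
    simp only [add_sub_cancel_left]
  rw [himage]
  refine Finset.sum_subset (fun n hn => ?_) (fun n _ hn => ?_)
  · exact Finset.mem_image.mpr ⟨n - m, Finset.sub_mem_sub hn hm, add_sub_cancel m n⟩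
  · simp [T, Finsupp.notMem_support_iff.mp hn]

theorem orthogonality_implies_second_QMF_general {r : ℕ}
    (F G : ℝ → Matrix (Fin r) (Fin r) ℝ)
    (A B : ℤ →₀ Matrix (Fin r) (Fin r) ℝ)
    (hFL2 : ∀ i j : Fin r, MemLp (fun x => F x i j) 2 volume)
    (hFOrth : ∀ k : ℤ, ∀ i j : Fin r,
      (∫ x : ℝ, ((F x)ᵀ * F (x + (k : ℝ))) i j) =
        (if k = 0 then (1 : Matrix (Fin r) (Fin r) ℝ) else 0) i j)
    (hCross : ∀ k : ℤ, ∀ i j : Fin r,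
      (∫ x : ℝ, ((F x)ᵀ * G (x + (k : ℝ))) i j) = 0)
    (hRef : ∀ x : ℝ, F x = ∑ m ∈ A.support, F (2 * x - (m : ℝ)) * A m)
    (hTwoScale : ∀ x : ℝ, G x = ∑ m ∈ B.support, F (2 * x - (m : ℝ)) * B m) :
    ∀ z : ℂ, ‖z‖ = 1 →
      mSharp A z * mSymbol B z + mSharp A (-z) * mSymbol B (-z) = 0 := by
  intro z hz
  have hz0 : z ≠ 0 := by
    rintro rfl
    simp at hz
  rw [mSharp_mul_mSymbol A B hz0, mSharp_mul_mSymbol A B (neg_ne_zero.mpr hz0),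
    ← Finset.sum_add_distrib]
  refine Finset.sum_eq_zero fun d _ => ?_
  rcases Int.even_or_odd d with hd | hd
  · have hcorr := crossCorr_eq_zero_of_even hFL2 (fun k => by ext i j; exact hFOrth k i j)
      (fun k => by ext i j; exact hCross k i j) hRef hTwoScale hd
    simp [hcorr]
  · rw [hd.neg_zpow, neg_smul, add_neg_cancel]

/-- If `F` and `G` each have orthonormal integer translates, `F` is refinable with
mask `A`, `G` satisfies the two-scale relation with mask `B`, and the translates of
`F` and `G` are mutually orthogonal, then the second QMF condition holds. -/
theorem orthogonality_implies_second_QMF {r : ℕ}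
    (F G : ℝ → Matrix (Fin r) (Fin r) ℝ)
    (A B : ℤ →₀ Matrix (Fin r) (Fin r) ℝ)
    (hFL2 : ∀ i j : Fin r, MemLp (fun x => F x i j) 2 volume)
    (hGL2 : ∀ i j : Fin r, MemLp (fun x => G x i j) 2 volume)
    (hFOrth : ∀ k : ℤ, ∀ i j : Fin r,
      (∫ x : ℝ, ((F x)ᵀ * F (x + (k : ℝ))) i j) =
        (if k = 0 then (1 : Matrix (Fin r) (Fin r) ℝ) else 0) i j)
    (hGOrth : ∀ k : ℤ, ∀ i j : Fin r,
      (∫ x : ℝ, ((G x)ᵀ * G (x + (k : ℝ))) i j) =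
        (if k = 0 then (1 : Matrix (Fin r) (Fin r) ℝ) else 0) i j)
    (hCross : ∀ k : ℤ, ∀ i j : Fin r,
      (∫ x : ℝ, ((F x)ᵀ * G (x + (k : ℝ))) i j) = 0)
    (hRef : ∀ x : ℝ, F x = ∑ m ∈ A.support, F (2 * x - (m : ℝ)) * A m)
    (hTwoScale : ∀ x : ℝ, G x = ∑ m ∈ B.support, F (2 * x - (m : ℝ)) * B m) :
    ∀ z : ℂ, ‖z‖ = 1 →
      mSharp A z * mSymbol B z + mSharp A (-z) * mSymbol B (-z) = 0 :=
  orthogonality_implies_second_QMF_general F G A B hFL2 hFOrth hCross hRef hTwoScale
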